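/- Let (G,t) be a topological abelian group with character group G' = (G,t)^. The following are equivalent: (1) every sequentially continuous group homomorphism from (G,t) to 𝕋 is continuous; (2) the group of continuous characters of (G, s_g[t]) equals G'; (3) the Bohr topology of (G, s_g[t]) equals the Bohr topology of (G,t), i.e. s_g[t]⁺ = t⁺; (4) there exists a g-sequential group topology τ on G with t ⊆ τ and τ⁺ = t⁺. -/

import Mathlib

open Filter Topology Pointwise

noncomputable section

/-- The circle group `𝕋 = ℝ/ℤ`. -/
abbrev Circle1 : Type := AddCircle (1 : ℝ)

variable {G : Type*}

/-- The Bohr topology associated to a group topology `t`: the initial topology induced by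
all `t`-continuous homomorphisms into the circle. -/
def bohr [AddCommGroup G] (t : TopologicalSpace G) : TopologicalSpace G :=
  ⨅ (χ : G →+ Circle1) (_ : @Continuous G Circle1 t _ ⇑χ),
    TopologicalSpace.induced ⇑χ inferInstance

/-- A group topology is totally bounded if every neighborhood of `0` has finitely many
translates covering the group. -/
def TotallyBoundedGroup [AddCommGroup G] (w : TopologicalSpace G) : Prop :=
  ∀ U ∈ @nhds G w 0, ∃ F : Finset G, ∀ g : G, ∃ f ∈ F, g - f ∈ U

/-- `(G,w)` is a Bohr group (a member of the class `𝓑`) if `w` is the Bohr topology of some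
locally compact Hausdorff group topology on `G`. -/
def IsBohrGroup [AddCommGroup G] (w : TopologicalSpace G) : Prop :=
  ∃ τ : TopologicalSpace G, @IsTopologicalAddGroup G τ _ ∧ @LocallyCompactSpace G τ ∧
    @T2Space G τ ∧ bohr τ = w

/-- The group of `t`-continuous characters of `G`, as a subgroup of `G →+ 𝕋`. -/
def charSubgroup [AddCommGroup G] (t : TopologicalSpace G) : AddSubgroup (G →+ Circle1) where
  carrier := {χ : G →+ Circle1 | @Continuous G Circle1 t _ ⇑χ}
  zero_mem' := by
    show @Continuous G Circle1 t _ ⇑(0 : G →+ Circle1)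
    simp only [AddMonoidHom.zero_apply, show ⇑(0 : G →+ Circle1) = fun _ => (0:Circle1) from rfl]
    exact @continuous_const G Circle1 t _ 0
  add_mem' := by
    intro χ φ hχ hφ
    show @Continuous G Circle1 t _ ⇑(χ + φ)
    simp only [show ⇑(χ + φ) = fun x => χ x + φ x from rfl]
    exact hχ.add hφ
  neg_mem' := by
    intro χ hχ
    show @Continuous G Circle1 t _ ⇑(-χ)
    simp only [show ⇑(-χ) = fun x => -(χ x) from rfl]
    exact hχ.neg

/-- The compact-open topology on the character group of `(G,t)`. -/
def coTop [AddCommGroup G] (t : TopologicalSpace G) :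
    TopologicalSpace (charSubgroup (G := G) t) :=
  TopologicalSpace.generateFrom
    {S | ∃ (K : Set G) (U : Set Circle1), @IsCompact G t K ∧ IsOpen U ∧
      S = {χ : charSubgroup (G := G) t | ∀ x ∈ K, (χ : G →+ Circle1) x ∈ U}}

/-- The topology of pointwise convergence on the character group of `(G,t)`. -/
def ptTop [AddCommGroup G] (t : TopologicalSpace G) :
    TopologicalSpace (charSubgroup (G := G) t) :=
  TopologicalSpace.induced (fun (χ : charSubgroup (G := G) t) (g : G) => (χ : G →+ Circle1) g)
    Pi.topologicalSpace

/-- Topological isomorphism between two groups carrying explicitly given topologies. -/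
def IsTopAddIso {A B : Type*} [AddCommGroup A] [AddCommGroup B]
    (tA : TopologicalSpace A) (tB : TopologicalSpace B) : Prop :=
  ∃ e : A ≃+ B, @Continuous A B tA tB ⇑e ∧ @Continuous B A tB tA ⇑e.symm

/-- `U` is sequentially open for the topology `t`. -/
def SeqOpenIn (t : TopologicalSpace G) (U : Set G) : Prop :=
  ∀ (u : ℕ → G) (a : G), Filter.Tendsto u Filter.atTop (@nhds G t a) → a ∈ U →
    ∀ᶠ n in Filter.atTop, u n ∈ U

/-- The sequential modification of `t`: the finest topology with the same convergent
sequences as `t`; its open sets are the `t`-sequentially open sets. -/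
def seqMod (t : TopologicalSpace G) : TopologicalSpace G where
  IsOpen U := SeqOpenIn t U
  isOpen_univ := fun _u _a _hu _ha => Filter.Eventually.of_forall fun _ => trivial
  isOpen_inter := fun _U _V hU hV u a hu ha => (hU u a hu ha.1).and (hV u a hu ha.2)
  isOpen_sUnion := fun S hS u a hu ha => by
    obtain ⟨s, hsS, has⟩ := ha
    exact (hS s hsS u a hu has).mono fun n hn => ⟨s, hsS, hn⟩

/-- The `g`-sequential modification `s_g[t]`: the finest group topology coarser than the
sequential modification of `t`. -/
def sg [AddCommGroup G] (t : TopologicalSpace G) : TopologicalSpace G :=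
  sInf {τ : TopologicalSpace G | @IsTopologicalAddGroup G τ _ ∧ seqMod t ≤ τ}

/-- The `k`-modification of `t`: `U` is open iff `U ∩ K` is relatively open in `K` for every
`t`-compact `K`. -/
def kMod (t : TopologicalSpace G) : TopologicalSpace G :=
  ⨆ (K : Set G) (_ : @IsCompact G t K),
    TopologicalSpace.coinduced (Subtype.val : K → G) (TopologicalSpace.induced Subtype.val t)

/-- The topology `k_g[t]`: the supremum (finest) of all group topologies lying between `t`
and the `k`-modification of `t`. -/
def kg [AddCommGroup G] (t : TopologicalSpace G) : TopologicalSpace G :=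
  sInf {τ : TopologicalSpace G | @IsTopologicalAddGroup G τ _ ∧ kMod t ≤ τ ∧ τ ≤ t}

/-- Two topologies have the same convergent sequences. -/
def SameSequences (t s : TopologicalSpace G) : Prop :=
  ∀ (u : ℕ → G) (a : G),
    Filter.Tendsto u Filter.atTop (@nhds G t a) ↔ Filter.Tendsto u Filter.atTop (@nhds G s a)

/-- Two topologies have the same compact subsets. -/
def SameCompacts (t s : TopologicalSpace G) : Prop :=
  ∀ K : Set G, @IsCompact G t K ↔ @IsCompact G s K

/-- A character is sequentially continuous for `t`. -/
def SeqContinuousChar [AddCommGroup G] (t : TopologicalSpace G) (f : G →+ Circle1) : Prop :=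
  ∀ (u : ℕ → G) (a : G), Filter.Tendsto u Filter.atTop (@nhds G t a) →
    Filter.Tendsto (fun n => f (u n)) Filter.atTop (nhds (f a))

/-- A character is `k`-continuous for `t`: continuous on every `t`-compact subset. -/
def KContinuousChar [AddCommGroup G] (t : TopologicalSpace G) (f : G →+ Circle1) : Prop :=
  ∀ K : Set G, @IsCompact G t K → @ContinuousOn G Circle1 t _ ⇑f K

/-! The characters continuous for `s_g[t]` are exactly the sequentially continuous ones: the
topology induced by a sequentially continuous character is a group topology coarser than the
sequential modification of `t`, while `s_g[t]` has the same convergent sequences as `t`. On the other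
hand a character is continuous for `t` iff it is continuous for `t⁺`, so `t⁺` determines the
character group. For (4) ⇒ (1): a `t`-sequentially continuous character is `τ`-sequentially
continuous, hence `τ`-continuous as `τ = s_g[τ]`, hence continuous for `τ⁺ = t⁺` and so for `t`. -/

section Sequential

variable {X : Type*}

lemma seqMod_le_self (t : TopologicalSpace X) : seqMod t ≤ t :=
  fun _U hU _u a hu ha => hu (@IsOpen.mem_nhds X t a _ hU ha)

lemma tendsto_seqMod_iff {t : TopologicalSpace X} {u : ℕ → X} {a : X} :
    Tendsto u atTop (@nhds X (seqMod t) a) ↔ Tendsto u atTop (@nhds X t a) := by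
  refine ⟨fun h => h.mono_right (nhds_mono (seqMod_le_self t)), fun h => ?_⟩
  rw [@tendsto_nhds _ (seqMod t)]
  exact fun U hU haU => hU u a h haU

lemma continuous_seqMod_of_seqContinuous {Y : Type*} [TopologicalSpace Y]
    {t : TopologicalSpace X} {f : X → Y} (hf : @SeqContinuous X Y t _ f) :
    @Continuous X Y (seqMod t) _ f := by
  rw [@continuous_def _ _ (seqMod t)]
  exact fun _U hU u a hu ha => hf hu (hU.mem_nhds ha)

end Sequential

section GSequential

variable [AddCommGroup G]

lemma isTopologicalAddGroup_sg (t : TopologicalSpace G) : @IsTopologicalAddGroup G (sg t) _ :=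
  topologicalAddGroup_sInf fun _τ hτ => hτ.1

lemma seqMod_le_sg (t : TopologicalSpace G) : seqMod t ≤ sg t :=
  le_sInf fun _τ hτ => hτ.2

variable {t : TopologicalSpace G} (hgrp : @IsTopologicalAddGroup G t _)
include hgrp

lemma sg_le_self : sg t ≤ t :=
  sInf_le ⟨hgrp, seqMod_le_self t⟩

lemma tendsto_sg_iff {u : ℕ → G} {a : G} :
    Tendsto u atTop (@nhds G (sg t) a) ↔ Tendsto u atTop (@nhds G t a) :=
  ⟨fun h => h.mono_right (nhds_mono (sg_le_self hgrp)),
   fun h => (tendsto_seqMod_iff.2 h).mono_right (nhds_mono (seqMod_le_sg t))⟩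

lemma seqMod_sg : seqMod (sg t) = seqMod t :=
  TopologicalSpace.ext <| funext fun _U => propext
    ⟨fun h u a hu => h u a ((tendsto_sg_iff hgrp).2 hu),
     fun h u a hu => h u a ((tendsto_sg_iff hgrp).1 hu)⟩

lemma sg_sg : sg (sg t) = sg t := by
  rw [sg, seqMod_sg hgrp]
  rfl

lemma continuous_sg_iff_seqContinuous {H : Type*} [AddGroup H] [TopologicalSpace H]
    [IsTopologicalAddGroup H] (f : G →+ H) :
    @Continuous G H (sg t) _ f ↔ @SeqContinuous G H t _ f := by
  constructor
  · intro hf u a hu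
    exact (@Continuous.seqContinuous G H (sg t) _ _ hf) ((tendsto_sg_iff hgrp).2 hu)
  · intro hf
    rw [@continuous_iff_le_induced _ _ _ (sg t)]
    exact sInf_le ⟨topologicalAddGroup_induced f,
      (@continuous_iff_le_induced _ _ _ (seqMod t)).1 (continuous_seqMod_of_seqContinuous hf)⟩

end GSequential

section Bohr

variable [AddCommGroup G]

lemma continuous_bohr_iff (t : TopologicalSpace G) (χ : G →+ Circle1) :
    @Continuous G Circle1 (bohr t) _ χ ↔ @Continuous G Circle1 t _ χ := by
  refine ⟨continuous_le_dom ?_, fun hχ => ?_⟩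
  · exact le_iInf₂ fun φ hφ => (@continuous_iff_le_induced _ _ φ t _).1 hφ
  · exact (@continuous_iff_le_induced _ _ _ (bohr t)).2 (iInf₂_le χ hχ)

lemma bohr_congr {s t : TopologicalSpace G} (h : charSubgroup s = charSubgroup t) :
    bohr s = bohr t :=
  iInf_congr fun χ => iInf_congr_Prop (SetLike.ext_iff.1 h χ) fun _ => rfl

end Bohr

/-- for a topological abelian group `(G,t)`, TFAE: every sequentially
continuous character is continuous; `(G,s_g[t])` has the same characters as `(G,t)`;
`s_g[t]⁺ = t⁺`; there is a `g`-sequential group topology `τ ⊇ t` with `τ⁺ = t⁺`. -/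
theorem stmt14 {G : Type*} [AddCommGroup G] (t : TopologicalSpace G)
    (hgrp : @IsTopologicalAddGroup G t _) :
    [∀ f : G →+ Circle1, SeqContinuousChar t f → @Continuous G Circle1 t _ ⇑f,
     charSubgroup (sg t) = charSubgroup t,
     bohr (sg t) = bohr t,
     ∃ τ : TopologicalSpace G, @IsTopologicalAddGroup G τ _ ∧ sg τ = τ ∧ τ ≤ t ∧
       bohr τ = bohr t].TFAE := by
  tfae_have 1 → 2 := fun h1 => AddSubgroup.ext fun χ =>
    ⟨fun hχ => h1 χ fun _ _ hu => (continuous_sg_iff_seqContinuous hgrp χ).1 hχ hu,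
     continuous_le_dom (sg_le_self hgrp)⟩
  tfae_have 2 → 3 := bohr_congr
  tfae_have 3 → 4 := fun h3 =>
    ⟨sg t, isTopologicalAddGroup_sg t, sg_sg hgrp, sg_le_self hgrp, h3⟩
  tfae_have 4 → 1 := by
    rintro ⟨τ, hτgrp, hτsg, hτt, hτbohr⟩ χ hχ
    have hχτ : @SeqContinuous G Circle1 τ _ χ :=
      fun _ _ hu => hχ _ _ (hu.mono_right (nhds_mono hτt))
    have hcont : @Continuous G Circle1 τ _ χ := by
      rw [← hτsg]
      exact (continuous_sg_iff_seqContinuous hτgrp χ).2 hχτ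
    rw [← continuous_bohr_iff, ← hτbohr, continuous_bohr_iff]
    exact hcont
  tfae_finish
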